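/- The compatibility condition for the Riccati pair γ_X = −(3/(4(1+ζν²)))γ² + (ν²U_XX − εU) + (ε/3)(ζ+√ν) and γ_T = [ (2/3)(ζν²+1)U_X − (2/3)(ζ+√ν)γ − γU ]_X, namely (γ_X)_T = (γ_T)_X as a polynomial identity in γ, holds if and only if U satisfies −2ν²U_X U_XX + 3εU_X U − ν²U_XXX U + (2/3)U_XXX − (2/3)ν^{5/2}U_XXX + εU_T − ν²U_XXT = 0. -/

import Mathlib

noncomputable section

/-- Partial derivative in the first variable. -/
def pdx (f : ℝ → ℝ → ℝ) (x t : ℝ) : ℝ := deriv (fun x' => f x' t) x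

/-- Partial derivative in the second variable. -/
def pdt (f : ℝ → ℝ → ℝ) (x t : ℝ) : ℝ := deriv (fun t' => f x t') t

/-- Smoothness of a function of two real variables. -/
def Smooth2 (f : ℝ → ℝ → ℝ) : Prop := ContDiff ℝ (⊤ : ℕ∞) (fun p : ℝ × ℝ => f p.1 p.2)

/-- m = ν² U_XX - ε U -/
def mgen (U : ℝ → ℝ → ℝ) (ε ν : ℝ) : ℝ → ℝ → ℝ := fun a b =>
  ν ^ 2 * pdx (fun c d => pdx U c d) a b - ε * U a b

/-- right-hand side of the γ_X equation, with γ a fiber variable g -/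
def genP (U : ℝ → ℝ → ℝ) (ε ν ζ : ℝ) : ℝ → ℝ → ℝ → ℝ := fun x t g =>
  -(3 / (4 * (1 + ζ * ν ^ 2))) * g ^ 2 + mgen U ε ν x t
    + ε / 3 * (ζ + Real.sqrt ν)

/-- right-hand side of the γ_T equation, with γ_X eliminated via `genP` -/
def genQ (U : ℝ → ℝ → ℝ) (ε ν ζ : ℝ) : ℝ → ℝ → ℝ → ℝ := fun x t g =>
  2 / 3 * (ζ * ν ^ 2 + 1) * pdx (fun c d => pdx U c d) x t
    - (2 / 3 * (ζ + Real.sqrt ν) + U x t) * genP U ε ν ζ x t g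
    - g * pdx U x t

lemma smooth2_hasDerivAt_x {f : ℝ → ℝ → ℝ} (hf : Smooth2 f) (x t : ℝ) :
    HasDerivAt (fun x' => f x' t) (pdx f x t) x := by
  have h1 : Differentiable ℝ (fun p : ℝ × ℝ => f p.1 p.2) := hf.differentiable (by simp)
  have hd : DifferentiableAt ℝ (fun x' => f x' t) x :=
    show DifferentiableAt ℝ ((fun p : ℝ × ℝ => f p.1 p.2) ∘ (fun x' : ℝ => (x', t))) x from
      (h1 (x, t)).comp x (differentiableAt_id.prodMk (differentiableAt_const t))
  exact hd.hasDerivAt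

lemma smooth2_hasDerivAt_t {f : ℝ → ℝ → ℝ} (hf : Smooth2 f) (x t : ℝ) :
    HasDerivAt (fun t' => f x t') (pdt f x t) t := by
  have h1 : Differentiable ℝ (fun p : ℝ × ℝ => f p.1 p.2) := hf.differentiable (by simp)
  have hd : DifferentiableAt ℝ (fun t' => f x t') t :=
    (h1 (x, t)).comp t ((differentiableAt_const x).prodMk differentiableAt_id)
  exact hd.hasDerivAt

lemma smooth2_pdx {f : ℝ → ℝ → ℝ} (hf : Smooth2 f) : Smooth2 (pdx f) := by
  set F : ℝ × ℝ → ℝ := fun p => f p.1 p.2 with hF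
  have key : ∀ a b : ℝ, pdx f a b = fderiv ℝ F (a, b) (1, 0) := by
    intro a b
    have h1 : HasFDerivAt F (fderiv ℝ F (a, b)) (a, b) :=
      (hf.differentiable (by simp) (a, b)).hasFDerivAt
    have h2 : HasDerivAt (fun x' : ℝ => (x', b)) ((1 : ℝ), (0 : ℝ)) a :=
      (hasDerivAt_id a).prodMk (hasDerivAt_const a b)
    have h3 : HasDerivAt (fun x' => f x' b) (fderiv ℝ F (a, b) (1, 0)) a :=
      show HasDerivAt (F ∘ (fun x' : ℝ => (x', b))) (fderiv ℝ F (a, b) (1, 0)) a from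
      h1.comp_hasDerivAt a h2
    rw [pdx]; exact h3.deriv
  have hc : ContDiff ℝ (⊤ : ℕ∞) (fun p : ℝ × ℝ => fderiv ℝ F p ((1 : ℝ), (0 : ℝ))) :=
    (hf.fderiv_right (by simp)).clm_apply contDiff_const
  have heq : (fun p : ℝ × ℝ => pdx f p.1 p.2)
      = fun p : ℝ × ℝ => fderiv ℝ F p ((1 : ℝ), (0 : ℝ)) := by
    funext p; exact key p.1 p.2
  rw [Smooth2, heq]; exact hc

lemma smooth2_pdt {f : ℝ → ℝ → ℝ} (hf : Smooth2 f) : Smooth2 (pdt f) := by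
  set F : ℝ × ℝ → ℝ := fun p => f p.1 p.2 with hF
  have key : ∀ a b : ℝ, pdt f a b = fderiv ℝ F (a, b) (0, 1) := by
    intro a b
    have h1 : HasFDerivAt F (fderiv ℝ F (a, b)) (a, b) :=
      (hf.differentiable (by simp) (a, b)).hasFDerivAt
    have h2 : HasDerivAt (fun t' : ℝ => (a, t')) ((0 : ℝ), (1 : ℝ)) b :=
      (hasDerivAt_const b a).prodMk (hasDerivAt_id b)
    have h3 : HasDerivAt (fun t' => f a t') (fderiv ℝ F (a, b) (0, 1)) b :=
      h1.comp_hasDerivAt b h2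
    rw [pdt]; exact h3.deriv
  have hc : ContDiff ℝ (⊤ : ℕ∞) (fun p : ℝ × ℝ => fderiv ℝ F p ((0 : ℝ), (1 : ℝ))) :=
    (hf.fderiv_right (by simp)).clm_apply contDiff_const
  have heq : (fun p : ℝ × ℝ => pdt f p.1 p.2)
      = fun p : ℝ × ℝ => fderiv ℝ F p ((0 : ℝ), (1 : ℝ)) := by
    funext p; exact key p.1 p.2
  rw [Smooth2, heq]; exact hc

/-- the compatibility condition (γ_X)_T = (γ_T)_X of the Riccati pair,
as an identity in the fiber variable γ, holds iff U satisfies the two-parameter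
shallow water equation. -/
theorem gen_eqn_compatibility (U : ℝ → ℝ → ℝ) (hU : Smooth2 U)
    (ε ν ζ : ℝ) (hε : ε = 0 ∨ ε = 1) (hν : 0 < ν) (hζ : 1 + ζ * ν ^ 2 ≠ 0) :
    (∀ x t g : ℝ,
        pdt (fun a b => genP U ε ν ζ a b g) x t
          + (-(3 / (2 * (1 + ζ * ν ^ 2))) * g) * genQ U ε ν ζ x t g
        = pdx (fun a b => genQ U ε ν ζ a b g) x t
          + (-(2 / 3 * (ζ + Real.sqrt ν) + U x t)
                * (-(3 / (2 * (1 + ζ * ν ^ 2))) * g)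
              - pdx U x t) * genP U ε ν ζ x t g)
      ↔ (∀ x t : ℝ,
        -2 * ν ^ 2 * pdx U x t * pdx (fun c d => pdx U c d) x t
          + 3 * ε * pdx U x t * U x t
          - ν ^ 2 * pdx (fun a b => pdx (fun c d => pdx U c d) a b) x t * U x t
          + 2 / 3 * pdx (fun a b => pdx (fun c d => pdx U c d) a b) x t
          - 2 / 3 * (ν ^ 2 * Real.sqrt ν)
              * pdx (fun a b => pdx (fun c d => pdx U c d) a b) x t
          + ε * pdt U x t
          - ν ^ 2 * pdt (fun a b => pdx (fun c d => pdx U c d) a b) x t = 0) := by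
  have hV : Smooth2 (pdx U) := smooth2_pdx hU
  have hW : Smooth2 (pdx (pdx U)) := smooth2_pdx hV
  -- value of ∂_T genP
  have hpdtP : ∀ x t g : ℝ, pdt (fun a b => genP U ε ν ζ a b g) x t
      = ν ^ 2 * pdt (pdx (pdx U)) x t - ε * pdt U x t := by
    intro x t g
    have hm : HasDerivAt (fun b => ν ^ 2 * pdx (pdx U) x b - ε * U x b)
        (ν ^ 2 * pdt (pdx (pdx U)) x t - ε * pdt U x t) t :=
      ((smooth2_hasDerivAt_t hW x t).const_mul (ν ^ 2)).sub
        ((smooth2_hasDerivAt_t hU x t).const_mul ε)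
    have h2 := (hm.const_add (-(3 / (4 * (1 + ζ * ν ^ 2))) * g ^ 2)).add_const
      (ε / 3 * (ζ + Real.sqrt ν))
    exact h2.deriv
  -- value of ∂_X genQ
  have hpdxQ : ∀ x t g : ℝ, pdx (fun a b => genQ U ε ν ζ a b g) x t
      = 2 / 3 * (ζ * ν ^ 2 + 1) * pdx (pdx (pdx U)) x t
        - (pdx U x t * genP U ε ν ζ x t g
            + (2 / 3 * (ζ + Real.sqrt ν) + U x t)
              * (ν ^ 2 * pdx (pdx (pdx U)) x t - ε * pdx U x t))
        - g * pdx (pdx U) x t := by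
    intro x t g
    have h1 : HasDerivAt (fun a => 2 / 3 * (ζ * ν ^ 2 + 1) * pdx (pdx U) a t)
        (2 / 3 * (ζ * ν ^ 2 + 1) * pdx (pdx (pdx U)) x t) x :=
      (smooth2_hasDerivAt_x hW x t).const_mul _
    have hmx : HasDerivAt (fun a => ν ^ 2 * pdx (pdx U) a t - ε * U a t)
        (ν ^ 2 * pdx (pdx (pdx U)) x t - ε * pdx U x t) x :=
      ((smooth2_hasDerivAt_x hW x t).const_mul (ν ^ 2)).sub
        ((smooth2_hasDerivAt_x hU x t).const_mul ε)
    have hP : HasDerivAt (fun a => genP U ε ν ζ a t g)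
        (ν ^ 2 * pdx (pdx (pdx U)) x t - ε * pdx U x t) x :=
      (hmx.const_add (-(3 / (4 * (1 + ζ * ν ^ 2))) * g ^ 2)).add_const
        (ε / 3 * (ζ + Real.sqrt ν))
    have hB : HasDerivAt (fun a => 2 / 3 * (ζ + Real.sqrt ν) + U a t) (pdx U x t) x :=
      (smooth2_hasDerivAt_x hU x t).const_add _
    have h2 : HasDerivAt
        (fun a => (2 / 3 * (ζ + Real.sqrt ν) + U a t) * genP U ε ν ζ a t g)
        (pdx U x t * genP U ε ν ζ x t g
          + (2 / 3 * (ζ + Real.sqrt ν) + U x t)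
            * (ν ^ 2 * pdx (pdx (pdx U)) x t - ε * pdx U x t)) x := hB.mul hP
    have h3 : HasDerivAt (fun a => g * pdx U a t) (g * pdx (pdx U) x t) x :=
      (smooth2_hasDerivAt_x hV x t).const_mul g
    exact ((h1.sub h2).sub h3).deriv
  -- pointwise equivalence
  have key : ∀ x t g : ℝ,
      (pdt (fun a b => genP U ε ν ζ a b g) x t
          + (-(3 / (2 * (1 + ζ * ν ^ 2))) * g) * genQ U ε ν ζ x t g
        = pdx (fun a b => genQ U ε ν ζ a b g) x t
          + (-(2 / 3 * (ζ + Real.sqrt ν) + U x t)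
                * (-(3 / (2 * (1 + ζ * ν ^ 2))) * g)
              - pdx U x t) * genP U ε ν ζ x t g)
      ↔ (-2 * ν ^ 2 * pdx U x t * pdx (fun c d => pdx U c d) x t
          + 3 * ε * pdx U x t * U x t
          - ν ^ 2 * pdx (fun a b => pdx (fun c d => pdx U c d) a b) x t * U x t
          + 2 / 3 * pdx (fun a b => pdx (fun c d => pdx U c d) a b) x t
          - 2 / 3 * (ν ^ 2 * Real.sqrt ν)
              * pdx (fun a b => pdx (fun c d => pdx U c d) a b) x t
          + ε * pdt U x t
          - ν ^ 2 * pdt (fun a b => pdx (fun c d => pdx U c d) a b) x t = 0) := by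
    intro x t g
    rw [hpdtP x t g, hpdxQ x t g]
    rw [← sub_eq_zero]
    have e1 : (fun c d => pdx U c d) = pdx U := rfl
    have e2 : (fun a b => pdx (fun c d => pdx U c d) a b) = pdx (pdx U) := rfl
    rw [e1, e2]
    simp only [genQ, genP, mgen, e1]
    rw [show ∀ A B : ℝ, (A = 0 ↔ B = 0) ↔ (A = 0 ↔ B = 0) from fun _ _ => Iff.rfl]
    have hdiff :
        (ν ^ 2 * pdt (pdx (pdx U)) x t - ε * pdt U x t
          + -(3 / (2 * (1 + ζ * ν ^ 2))) * g *
            (2 / 3 * (ζ * ν ^ 2 + 1) * pdx (pdx U) x t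
              - (2 / 3 * (ζ + Real.sqrt ν) + U x t) *
                (-(3 / (4 * (1 + ζ * ν ^ 2))) * g ^ 2
                  + (ν ^ 2 * pdx (pdx U) x t - ε * U x t)
                  + ε / 3 * (ζ + Real.sqrt ν))
              - g * pdx U x t)
          - (2 / 3 * (ζ * ν ^ 2 + 1) * pdx (pdx (pdx U)) x t
              - (pdx U x t *
                  (-(3 / (4 * (1 + ζ * ν ^ 2))) * g ^ 2
                    + (ν ^ 2 * pdx (pdx U) x t - ε * U x t)
                    + ε / 3 * (ζ + Real.sqrt ν))
                + (2 / 3 * (ζ + Real.sqrt ν) + U x t)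
                  * (ν ^ 2 * pdx (pdx (pdx U)) x t - ε * pdx U x t))
              - g * pdx (pdx U) x t
            + (-(2 / 3 * (ζ + Real.sqrt ν) + U x t) * (-(3 / (2 * (1 + ζ * ν ^ 2))) * g)
                - pdx U x t) *
              (-(3 / (4 * (1 + ζ * ν ^ 2))) * g ^ 2
                + (ν ^ 2 * pdx (pdx U) x t - ε * U x t)
                + ε / 3 * (ζ + Real.sqrt ν))))
        = -(-2 * ν ^ 2 * pdx U x t * pdx (pdx U) x t
          + 3 * ε * pdx U x t * U x t
          - ν ^ 2 * pdx (pdx (pdx U)) x t * U x t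
          + 2 / 3 * pdx (pdx (pdx U)) x t
          - 2 / 3 * (ν ^ 2 * Real.sqrt ν) * pdx (pdx (pdx U)) x t
          + ε * pdt U x t
          - ν ^ 2 * pdt (pdx (pdx U)) x t) := by
      have hζ' : 1 + ν ^ 2 * ζ ≠ 0 := by rwa [mul_comm] at hζ
      field_simp
      ring
    rw [hdiff, neg_eq_zero]
  constructor
  · intro h x t
    exact (key x t 0).mp (h x t 0)
  · intro h x t g
    exact (key x t g).mpr (h x t)

end
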